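/- Every vertex-transitive finite connected graph is 3-connected, a cycle, a K2, or a K1. -/

import Mathlib

namespace Paper

open SimpleGraph

variable {V : Type*} [Fintype V] [DecidableEq V]

/-- A graph is `k`-connected if it has more than `k` vertices and deleting
fewer than `k` vertices never disconnects it. -/
def KConnected {W : Type*} (k : ℕ) (H : SimpleGraph W) : Prop :=
  k < Nat.card W ∧ ∀ S : Set W, S.ncard < k → (H.induce Sᶜ).Connected

/-- A mixed-separation of `G`: `A ∪ B = V(G)` and both `A \ B` and `B \ A` are nonempty. -/
def MixedSep (G : SimpleGraph V) (A B : Set V) : Prop :=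
  A ∪ B = Set.univ ∧ (A \ B).Nonempty ∧ (B \ A).Nonempty

/-- The edges of the separator of `(A,B)`: the edges between `A \ B` and `B \ A`. -/
def sepEdges (G : SimpleGraph V) (A B : Set V) : Set (Sym2 V) :=
  {e | e ∈ G.edgeSet ∧ ∃ x ∈ A \ B, ∃ y ∈ B \ A, e = s(x, y)}

/-- The separator of `(A,B)`: the vertices of `A ∩ B` together with the
edges between `A \ B` and `B \ A`, viewed as a set in `V ⊕ Sym2 V`. -/
def sepSet (G : SimpleGraph V) (A B : Set V) : Set (V ⊕ Sym2 V) :=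
  (Sum.inl '' (A ∩ B)) ∪ (Sum.inr '' sepEdges G A B)

/-- The order of a mixed-separation: the size of its separator. -/
noncomputable def sepOrder (G : SimpleGraph V) (A B : Set V) : ℕ :=
  (sepSet G A B).ncard

/-- A mixed `k`-separation. -/
def MixedKSep (G : SimpleGraph V) (k : ℕ) (A B : Set V) : Prop :=
  MixedSep G A B ∧ sepOrder G A B = k

/-- A tri-separation: a mixed 3-separation such that every vertex of `A ∩ B`
has at least two neighbours in both `G[A]` and `G[B]`. -/
def TriSep (G : SimpleGraph V) (A B : Set V) : Prop :=
  MixedKSep G 3 A B ∧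
    ∀ v ∈ A ∩ B, 2 ≤ (G.neighborSet v ∩ A).ncard ∧ 2 ≤ (G.neighborSet v ∩ B).ncard

/-- Two mixed-separations are nested if, after possibly swapping the names of
the sides of either one, `A ⊆ C` and `B ⊇ D`. -/
def Nested (A B C D : Set V) : Prop :=
  (A ⊆ C ∧ D ⊆ B) ∨ (A ⊆ D ∧ C ⊆ B) ∨ (B ⊆ C ∧ D ⊆ A) ∨ (B ⊆ D ∧ C ⊆ A)

/-- The induced subgraph `G[A]` contains a cycle. -/
def HasCycleIn (G : SimpleGraph V) (A : Set V) : Prop :=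
  ∃ (u : V) (p : G.Walk u u), p.IsCycle ∧ ∀ x ∈ p.support, x ∈ A

/-- A mixed 3-separation is nontrivial if both sides induce a subgraph containing a cycle. -/
def NontrivialSep (G : SimpleGraph V) (A B : Set V) : Prop :=
  HasCycleIn G A ∧ HasCycleIn G B

/-- A mixed-separation is strong if every vertex in its separator has degree at least 4. -/
def StrongSep (G : SimpleGraph V) (A B : Set V) : Prop :=
  ∀ v ∈ A ∩ B, 4 ≤ (G.neighborSet v).ncard

/-- A tri-separation is totally nested if it is nested with every tri-separation of `G`. -/
def TotallyNested (G : SimpleGraph V) (A B : Set V) : Prop :=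
  ∀ C D : Set V, TriSep G C D → Nested A B C D

/-- A trivial tri-separation: its sides are the sides `{v}` and `V \ {v}` of an
atomic cut at a degree-3 vertex `v`. -/
def TrivialSep (G : SimpleGraph V) (A B : Set V) : Prop :=
  ∃ v : V, (G.neighborSet v).ncard = 3 ∧
    ((A = {v} ∧ B = {v}ᶜ) ∨ (B = {v} ∧ A = {v}ᶜ))

/-- Diagonal edges of the crossing-diagram of `(A,B)` and `(C,D)`:
edges whose endvertices lie in opposite corners. -/
def diagEdges (G : SimpleGraph V) (A B C D : Set V) : Set (Sym2 V) :=
  {e | e ∈ G.edgeSet ∧ ∃ x y, e = s(x, y) ∧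
    ((x ∈ (A \ B) ∩ (C \ D) ∧ y ∈ (B \ A) ∩ (D \ C)) ∨
     (x ∈ (A \ B) ∩ (D \ C) ∧ y ∈ (B \ A) ∩ (C \ D)))}

/-- The centre of the crossing-diagram: `A ∩ B ∩ C ∩ D` together with the diagonal edges. -/
def centre (G : SimpleGraph V) (A B C D : Set V) : Set (V ⊕ Sym2 V) :=
  (Sum.inl '' (A ∩ B ∩ C ∩ D)) ∪ (Sum.inr '' diagEdges G A B C D)

/-- The link for the side `C` in the crossing-diagram of `(A,B)` and `(C,D)`:
the vertices `(A ∩ B) \ D` together with the non-diagonal edges of the separator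
of `(A,B)` having an endvertex in a corner for `C`. -/
def link (G : SimpleGraph V) (A B C D : Set V) : Set (V ⊕ Sym2 V) :=
  (Sum.inl '' ((A ∩ B) \ D)) ∪
    (Sum.inr '' {e | e ∈ sepEdges G A B ∧ e ∉ diagEdges G A B C D ∧ ∃ x ∈ e, x ∈ C \ D})

/-- The corner-separator at the corner for `{A,C}`: the union of the links for `A`
and for `C` together with the centre, minus the diagonal edges without an
endvertex in the corner for `{A,C}`. -/
def cornerSep (G : SimpleGraph V) (A B C D : Set V) : Set (V ⊕ Sym2 V) :=
  link G C D A B ∪ link G A B C D ∪ (Sum.inl '' (A ∩ B ∩ C ∩ D)) ∪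
    (Sum.inr '' {e | e ∈ diagEdges G A B C D ∧ ∃ x ∈ e, x ∈ (A \ B) ∩ (C \ D)})

/-- Jumping edges: edges joining vertices of two opposite links. -/
def jumpEdges (G : SimpleGraph V) (A B C D : Set V) : Set (Sym2 V) :=
  {e | e ∈ G.edgeSet ∧ ∃ x y, e = s(x, y) ∧
    ((x ∈ (A ∩ B) \ D ∧ y ∈ (A ∩ B) \ C) ∨ (x ∈ (C ∩ D) \ B ∧ y ∈ (C ∩ D) \ A))}

/-- A 2-separation: a separation of order two with no edges in its separator. -/
def TwoSep (G : SimpleGraph V) (A B : Set V) : Prop :=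
  A ∪ B = Set.univ ∧ (A \ B).Nonempty ∧ (B \ A).Nonempty ∧
    (A ∩ B).ncard = 2 ∧ sepEdges G A B = ∅

/-- `K` is (the vertex set of) a connected component of `G - S`. -/
def IsCompOf (G : SimpleGraph V) (S K : Set V) : Prop :=
  ∃ c : (G.induce Sᶜ).ConnectedComponent, K = Subtype.val '' c.supp

/-!
A connected graph on at most two vertices is complete, and a vertex-transitive graph is regular.
A connected regular graph on at least three vertices has degree at least 2; in degree 2 its
components are cycles, so it is a single Hamiltonian cycle.

In degree at least 3 we use Mader's atoms: smallest fragments `A` of smallest separators `S`.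
If `A` meets another smallest separator `T`, counting the corners cut out by `S` and `T` shows
that `A ⊆ T`. An automorphism `φ` moving a vertex of `A` into `S` therefore gives `φ A ⊆ S`, and
an edge from `S` into `A` then gives `A ⊆ φ S`. Hence `|A| ≤ |S|`, while the at least three
neighbours of a vertex of `A` lie in `A ∪ S`. If `|S| ≤ 2` this forces `φ A = S` and `φ S = A`,
so `A ∪ S` is closed under adjacency, which contradicts connectivity.
-/

section Fragments

variable {α β : Type*} {G : SimpleGraph α} {S T F K X : Set α}

theorem exists_adj_mem_notMem (hG : G.Preconnected) {u v : α} (hu : u ∈ X) (hv : v ∉ X) :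
    ∃ a ∈ X, ∃ b ∉ X, G.Adj a b := by
  obtain ⟨p⟩ := hG u v
  obtain ⟨d, -, hd, hd'⟩ := p.exists_boundary_dart X hu hv
  exact ⟨d.fst, hd, d.snd, hd', d.adj⟩

theorem ncard_neighborSet_map {H : SimpleGraph β} (φ : G ≃g H) (v : α) :
    (H.neighborSet (φ v)).ncard = (G.neighborSet v).ncard := by
  rw [← Nat.card_coe_set_eq, ← Nat.card_coe_set_eq]
  exact Nat.card_congr (φ.mapNeighborSet v).symm

/-- `F` is a nonempty union of components of `G - S`, missing at least one of them. -/
structure IsFragment (G : SimpleGraph α) (S F : Set α) : Prop where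
  nonempty : F.Nonempty
  disjoint : Disjoint F S
  adj_mem : ∀ ⦃a b⦄, a ∈ F → G.Adj a b → b ∈ F ∪ S
  compl_nonempty : (F ∪ S)ᶜ.Nonempty

namespace IsFragment

theorem compl (h : IsFragment G S F) : IsFragment G S (F ∪ S)ᶜ where
  nonempty := h.compl_nonempty
  disjoint := disjoint_compl_left.mono_right Set.subset_union_right
  adj_mem a b ha hab := by
    by_cases hb : b ∈ F
    · exact absurd (h.adj_mem hb hab.symm) ha
    · by_cases hbS : b ∈ S
      · exact Or.inr hbS
      · exact Or.inl fun h => h.elim hb hbS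
  compl_nonempty := by
    obtain ⟨x, hx⟩ := h.nonempty
    exact ⟨x, by simp [hx, Set.disjoint_left.mp h.disjoint hx]⟩

theorem image {H : SimpleGraph β} (h : IsFragment G S F) (φ : G ≃g H) :
    IsFragment H (φ '' S) (φ '' F) where
  nonempty := h.nonempty.image φ
  disjoint := (Set.disjoint_image_iff φ.injective).mpr h.disjoint
  adj_mem := by
    rintro _ b ⟨a, ha, rfl⟩ hab
    obtain ⟨b, rfl⟩ := φ.surjective b
    rw [← Set.image_union]
    exact Set.mem_image_of_mem φ (h.adj_mem ha (φ.map_adj_iff.mp hab))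
  compl_nonempty := by
    rw [← Set.image_union, ← Set.image_compl_eq φ.bijective]
    exact h.compl_nonempty.image φ

theorem inter (hF : IsFragment G S F) (hK : IsFragment G T K) (hne : (F ∩ K).Nonempty) :
    IsFragment G ((T ∩ F) ∪ (T ∩ S) ∪ (S ∩ K)) (F ∩ K) where
  nonempty := hne
  disjoint := by
    have := Set.disjoint_left.mp hF.disjoint
    have := Set.disjoint_left.mp hK.disjoint
    rw [Set.disjoint_left]
    simp only [Set.mem_inter_iff, Set.mem_union]
    tauto
  adj_mem a b ha hab := by
    have := hF.adj_mem ha.1 hab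
    have := hK.adj_mem ha.2 hab
    simp only [Set.mem_inter_iff, Set.mem_union] at *
    tauto
  compl_nonempty := by
    obtain ⟨w, hw⟩ := hK.compl_nonempty
    refine ⟨w, ?_⟩
    simp only [Set.mem_compl_iff, Set.mem_union, Set.mem_inter_iff] at *
    tauto

theorem sep_nonempty (hG : G.Preconnected) (h : IsFragment G S F) : S.Nonempty := by
  obtain ⟨u, hu⟩ := h.nonempty
  obtain ⟨v, hv⟩ := h.compl_nonempty
  obtain ⟨a, ha, b, hb, hab⟩ := exists_adj_mem_notMem hG hu (fun h => hv (Or.inl h))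
  exact ⟨b, (h.adj_mem ha hab).resolve_left hb⟩

theorem ncard_neighborSet_lt [Finite α] (h : IsFragment G S F) {x : α} (hx : x ∈ F) :
    (G.neighborSet x).ncard < F.ncard + S.ncard := by
  have hsub : insert x (G.neighborSet x) ⊆ F ∪ S :=
    Set.insert_subset (Or.inl hx) fun _ hb => h.adj_mem hx hb
  have := Set.ncard_le_ncard hsub
  rw [Set.ncard_insert_of_notMem G.notMem_neighborSet_self] at this
  have := Set.ncard_union_le F S
  omega

end IsFragment

theorem exists_isFragment_of_not_connected (hS : Sᶜ.Nonempty) (h : ¬ (G.induce Sᶜ).Connected) :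
    ∃ F, IsFragment G S F := by
  obtain ⟨u, hu⟩ := hS
  set c := (G.induce Sᶜ).connectedComponentMk ⟨u, hu⟩
  refine ⟨Subtype.val '' c.supp, ⟨⟨u, ⟨⟨u, hu⟩, rfl, rfl⟩⟩, ?_, ?_, ?_⟩⟩
  · exact Set.disjoint_left.mpr fun _ ⟨v, _, hv⟩ => hv ▸ v.2
  · rintro _ b ⟨a, ha, rfl⟩ hab
    by_cases hb : b ∈ S
    · exact Or.inr hb
    · refine Or.inl ⟨⟨b, hb⟩, ?_, rfl⟩
      rw [ConnectedComponent.mem_supp_iff] at ha ⊢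
      rw [← ha]
      exact ConnectedComponent.connectedComponentMk_eq_of_adj (G := G.induce Sᶜ) hab.symm
  · by_contra hcov
    apply h
    rw [connected_iff]
    refine ⟨fun v w => ?_, ⟨⟨u, hu⟩⟩⟩
    have hmem : ∀ v : ↥Sᶜ, v ∈ c.supp := by
      intro v
      by_contra hv
      exact hcov ⟨v, fun h => h.elim (fun ⟨v', hv', hvv'⟩ => hv (Subtype.ext hvv' ▸ hv')) v.2⟩
    exact ConnectedComponent.exact ((hmem v).trans (hmem w).symm)

end Fragments

section Atoms

variable {α β : Type*} {G : SimpleGraph α} {S T F A : Set α}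

theorem ncard_eq_inter_add_inter_add_inter_compl [Finite α] (h : Disjoint A S) (X : Set α) :
    X.ncard = (X ∩ A).ncard + (X ∩ S).ncard + (X ∩ (A ∪ S)ᶜ).ncard := by
  rw [← Set.ncard_inter_add_ncard_sdiff_eq_ncard X (A ∪ S), Set.inter_union_distrib_left,
    Set.ncard_union_eq (h.mono Set.inter_subset_right Set.inter_subset_right), Set.sdiff_eq]

theorem compl_union_compl_union (h : Disjoint F S) : ((F ∪ S)ᶜ ∪ S)ᶜ = F := by
  ext x
  have : x ∈ F → x ∉ S := fun hx => Set.disjoint_left.mp h hx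
  simp only [Set.mem_compl_iff, Set.mem_union]
  tauto

structure IsAtom (G : SimpleGraph α) (S A : Set α) : Prop where
  isFragment : IsFragment G S A
  min_sep : ∀ ⦃T F⦄, IsFragment G T F → S.ncard ≤ T.ncard
  min_fragment : ∀ ⦃T F⦄, IsFragment G T F → T.ncard = S.ncard → A.ncard ≤ F.ncard

theorem exists_isAtom [Finite α] (h : IsFragment G S F) : ∃ T A, IsAtom G T A := by
  obtain ⟨⟨T, A⟩, hA, hmin⟩ := Set.exists_min_image {p : Set α × Set α | IsFragment G p.1 p.2}
    (fun p => toLex (p.1.ncard, p.2.ncard)) (Set.toFinite _) ⟨(S, F), h⟩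
  refine ⟨T, A, hA, fun T' F' hF' => ?_, fun T' F' hF' hT' => ?_⟩ <;>
  · have := Prod.Lex.toLex_le_toLex.mp (hmin (T', F') hF')
    dsimp only at this
    omega

namespace IsAtom

theorem image {H : SimpleGraph β} (h : IsAtom G S A) (φ : G ≃g H) : IsAtom H (φ '' S) (φ '' A) where
  isFragment := h.isFragment.image φ
  min_sep T F hF := by
    have := h.min_sep (hF.image φ.symm)
    rwa [Set.ncard_image_of_injective _ φ.injective,
      Set.ncard_image_of_injective _ φ.symm.injective] at *
  min_fragment T F hF hT := by
    have := h.min_fragment (hF.image φ.symm)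
    rw [Set.ncard_image_of_injective _ φ.injective] at hT ⊢
    rw [Set.ncard_image_of_injective _ φ.symm.injective,
      Set.ncard_image_of_injective _ φ.symm.injective] at this
    exact this hT

theorem exists_adj [Finite α] (hA : IsAtom G S A) (hF : IsFragment G S F) {s : α} (hs : s ∈ S) :
    ∃ a ∈ F, G.Adj s a := by
  by_contra! hno
  have hF' : IsFragment G (S \ {s}) F :=
    { nonempty := hF.nonempty
      disjoint := hF.disjoint.mono_right Set.sdiff_subset
      adj_mem := fun a b ha hab => by
        refine (hF.adj_mem ha hab).imp_right fun hb => ⟨hb, ?_⟩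
        rintro rfl
        exact hno a ha hab.symm
      compl_nonempty := hF.compl_nonempty.mono
        (Set.compl_subset_compl.mpr (Set.union_subset_union_right _ Set.sdiff_subset)) }
  exact (hA.min_sep hF').not_gt (Set.ncard_sdiff_singleton_lt_of_mem hs)

/-- The corner `A ∩ F` is a fragment smaller than `A`, so it needs a separator larger than `S`. -/
theorem ncard_inter_compl_lt [Finite α] (hA : IsAtom G S A) (hT : IsFragment G T F)
    (hTS : T.ncard = S.ncard) (hAT : (A ∩ T).Nonempty) (hAF : (A ∩ F).Nonempty) :
    (T ∩ (A ∪ S)ᶜ).ncard < (S ∩ F).ncard := by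
  have hC := hA.isFragment.inter hT hAF
  have hlt : S.ncard < ((T ∩ A) ∪ (T ∩ S) ∪ (S ∩ F)).ncard := by
    refine (hA.min_sep hC).lt_of_ne fun heq => ?_
    obtain ⟨x, hxA, hxT⟩ := hAT
    have hss : A ∩ F ⊂ A := (Set.ssubset_iff_of_subset Set.inter_subset_left).mpr
      ⟨x, hxA, fun hx => Set.disjoint_left.mp hT.disjoint hx.2 hxT⟩
    exact (hA.min_fragment hC heq.symm).not_gt (Set.ncard_lt_ncard hss)
  have := Set.ncard_union_le ((T ∩ A) ∪ (T ∩ S)) (S ∩ F)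
  have := Set.ncard_union_le (T ∩ A) (T ∩ S)
  have := ncard_eq_inter_add_inter_add_inter_compl hA.isFragment.disjoint T
  omega

/-- The opposite corner is then cut off by fewer than `|S|` vertices, so it is empty. -/
theorem compl_inter_compl_eq_empty [Finite α] (hA : IsAtom G S A) (hT : IsFragment G T F)
    (hTS : T.ncard = S.ncard) (hAT : (A ∩ T).Nonempty) (hAF : (A ∩ F).Nonempty) :
    (A ∪ S)ᶜ ∩ (F ∪ T)ᶜ = ∅ := by
  rw [← Set.not_nonempty_iff_eq_empty]
  intro hne
  have := hA.min_sep (hA.isFragment.compl.inter hT.compl hne)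
  have := hA.ncard_inter_compl_lt hT hTS hAT hAF
  have := Set.ncard_union_le ((T ∩ (A ∪ S)ᶜ) ∪ (T ∩ S)) (S ∩ (F ∪ T)ᶜ)
  have := Set.ncard_union_le (T ∩ (A ∪ S)ᶜ) (T ∩ S)
  have := ncard_eq_inter_add_inter_add_inter_compl hT.disjoint S
  rw [Set.inter_comm T S] at *
  omega

theorem inter_eq_empty [Finite α] (hA : IsAtom G S A) (hT : IsFragment G T F)
    (hTS : T.ncard = S.ncard) (hAT : (A ∩ T).Nonempty) : A ∩ F = ∅ := by
  by_contra hne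
  have hAF := Set.nonempty_iff_ne_empty.mpr hne
  have hlt := hA.ncard_inter_compl_lt hT hTS hAT hAF
  have hBF' := hA.compl_inter_compl_eq_empty hT hTS hAT hAF
  have hSF' : A.ncard ≤ (S ∩ (F ∪ T)ᶜ).ncard := by
    by_cases hAF' : (A ∩ (F ∪ T)ᶜ).Nonempty
    · have hlt' := hA.ncard_inter_compl_lt hT.compl hTS hAT hAF'
      have hBF := hA.compl_inter_compl_eq_empty hT.compl hTS hAT hAF'
      rw [compl_union_compl_union hT.disjoint] at hBF
      have hBT : (A ∪ S)ᶜ ⊆ T := fun x hx => by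
        by_contra hxT
        have hxF : x ∉ F := fun h => Set.eq_empty_iff_forall_notMem.mp hBF x ⟨hx, h⟩
        exact Set.eq_empty_iff_forall_notMem.mp hBF' x ⟨hx, fun h => h.elim hxF hxT⟩
      rw [Set.inter_eq_right.mpr hBT] at hlt'
      have := hA.min_fragment hA.isFragment.compl rfl
      omega
    · have hF'S : (F ∪ T)ᶜ ⊆ S := fun x hx => by
        by_contra hxS
        refine hAF' ⟨x, ?_, hx⟩
        by_contra hxA
        exact Set.eq_empty_iff_forall_notMem.mp hBF' x ⟨fun h => h.elim hxA hxS, hx⟩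
      rw [Set.inter_eq_right.mpr hF'S]
      exact hA.min_fragment hT.compl hTS
  -- counting `T` along `A, S, (A ∪ S)ᶜ` and `S` along `F, T, (F ∪ T)ᶜ` gives `|T ∩ A| > |A|`
  have := ncard_eq_inter_add_inter_add_inter_compl hA.isFragment.disjoint T
  have := ncard_eq_inter_add_inter_add_inter_compl hT.disjoint S
  have := Set.ncard_le_ncard (Set.inter_subset_right : T ∩ A ⊆ A)
  rw [Set.inter_comm T S] at *
  omega

theorem subset_of_inter_nonempty [Finite α] (hA : IsAtom G S A) (hT : IsFragment G T F)
    (hTS : T.ncard = S.ncard) (hAT : (A ∩ T).Nonempty) : A ⊆ T := by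
  intro x hxA
  by_contra hxT
  by_cases hxF : x ∈ F
  · exact Set.eq_empty_iff_forall_notMem.mp (hA.inter_eq_empty hT hTS hAT) x ⟨hxA, hxF⟩
  · exact Set.eq_empty_iff_forall_notMem.mp (hA.inter_eq_empty hT.compl hTS hAT) x
      ⟨hxA, fun h => h.elim hxF hxT⟩

end IsAtom

end Atoms

section VertexTransitive

variable {α : Type*} {G : SimpleGraph α} {S A : Set α}

theorem IsAtom.three_le_ncard [Finite α] (hG : G.Connected)
    (hvt : ∀ u v : α, ∃ φ : G ≃g G, φ u = v) (hdeg : ∀ v, 3 ≤ (G.neighborSet v).ncard)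
    (hA : IsAtom G S A) : 3 ≤ S.ncard := by
  obtain ⟨s, hs⟩ := hA.isFragment.sep_nonempty hG.preconnected
  obtain ⟨x, hx⟩ := hA.isFragment.nonempty
  obtain ⟨φ, hφ⟩ := hvt x s
  have hA' := hA.image φ
  have hS' : (φ '' S).ncard = S.ncard := Set.ncard_image_of_injective _ φ.injective
  have hA'S : φ '' A ⊆ S :=
    hA'.subset_of_inter_nonempty hA.isFragment hS'.symm ⟨s, ⟨x, hx, hφ⟩, hs⟩
  obtain ⟨a, ha, hsa⟩ := hA.exists_adj hA.isFragment hs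
  have haS' : a ∈ φ '' S := (hA'.isFragment.adj_mem ⟨x, hx, hφ⟩ hsa).resolve_left
    fun h => Set.disjoint_left.mp hA.isFragment.disjoint ha (hA'S h)
  have hAS' : A ⊆ φ '' S := hA.subset_of_inter_nonempty hA'.isFragment hS' ⟨a, ha, haS'⟩
  have hAS : A.ncard ≤ S.ncard := hS' ▸ Set.ncard_le_ncard hAS'
  have hxdeg := hA.isFragment.ncard_neighborSet_lt hx
  have hx3 := hdeg x
  by_contra! hlt
  have hA'eq : φ '' A = S :=
    Set.eq_of_subset_of_ncard_le hA'S (by rw [Set.ncard_image_of_injective _ φ.injective]; omega)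
  have hAeq : φ '' S = A := (Set.eq_of_subset_of_ncard_le hAS' (by omega)).symm
  have hclosed : ∀ ⦃u v⦄, u ∈ A ∪ S → G.Adj u v → v ∈ A ∪ S := by
    rintro u v (hu | hu) huv
    · exact hA.isFragment.adj_mem hu huv
    · have := hA'.isFragment.adj_mem (hA'eq ▸ hu) huv
      rwa [hA'eq, hAeq, Set.union_comm] at this
  obtain ⟨w, hw⟩ := hA.isFragment.compl_nonempty
  obtain ⟨u, hu, v, hv, huv⟩ := exists_adj_mem_notMem hG.preconnected (Or.inl hx) hw
  exact hv (hclosed hu huv)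

theorem kConnected_three [Finite α] (hG : G.Connected) (hvt : ∀ u v : α, ∃ φ : G ≃g G, φ u = v)
    (hdeg : ∀ v, 3 ≤ (G.neighborSet v).ncard) : KConnected 3 G := by
  obtain ⟨v⟩ := hG.nonempty
  have hcard : 3 < Nat.card α := by
    have := Set.ncard_le_ncard (Set.subset_univ (insert v (G.neighborSet v)))
    rw [Set.ncard_insert_of_notMem G.notMem_neighborSet_self, Set.ncard_univ] at this
    have := hdeg v
    omega
  refine ⟨hcard, fun S hS => ?_⟩
  by_contra hconn
  have hSc : Sᶜ.Nonempty := by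
    rw [Set.nonempty_compl]
    rintro rfl
    rw [Set.ncard_univ] at hS
    omega
  obtain ⟨F, hF⟩ := exists_isFragment_of_not_connected hSc hconn
  obtain ⟨T, A, hA⟩ := exists_isAtom hF
  have := hA.min_sep hF
  have := hA.three_le_ncard hG hvt hdeg
  omega

end VertexTransitive

section SmallCases

variable {α β : Type*} {G : SimpleGraph α}

theorem nonempty_iso_of_bijective [Finite α] {H : SimpleGraph β} (f : H →g G)
    (hf : Function.Bijective f)
    (hdeg : ∀ v, (G.neighborSet (f v)).ncard ≤ (H.neighborSet v).ncard) : Nonempty (H ≃g G) := by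
  have himage : ∀ v, f '' H.neighborSet v = G.neighborSet (f v) := fun v =>
    Set.eq_of_subset_of_ncard_le (Set.image_subset_iff.mpr fun _ => f.map_adj)
      (by rw [Set.ncard_image_of_injective _ hf.1]; exact hdeg v)
  refine ⟨⟨Equiv.ofBijective f hf, fun {u w} => ⟨fun huw => ?_, f.map_adj⟩⟩⟩
  have hw : f w ∈ f '' H.neighborSet u := (himage u).symm ▸ huw
  obtain ⟨w', hw', hfw⟩ := hw
  exact hf.1 hfw ▸ hw'

theorem ncard_neighborSet_cycleGraph {n : ℕ} (hn : 3 ≤ n) (u : Fin n) :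
    ((cycleGraph n).neighborSet u).ncard = 2 := by
  obtain ⟨k, rfl⟩ : ∃ k, n = k + 3 := ⟨n - 3, by omega⟩
  rw [← Nat.card_coe_set_eq, Nat.card_eq_fintype_card, card_neighborSet_eq_degree,
    cycleGraph_degree_three_le]

theorem nonempty_iso_cycleGraph [Finite α] (hG : G.Connected)
    (hdeg : ∀ v, (G.neighborSet v).ncard = 2) :
    ∃ n, 3 ≤ n ∧ Nonempty (G ≃g cycleGraph n) := by
  classical
  have := Fintype.ofFinite α
  obtain ⟨v⟩ := hG.nonempty
  have hcyc : G.IsCycles := fun v _ => hdeg v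
  obtain ⟨p, hp, hverts⟩ := hcyc.exists_cycle_toSubgraph_verts_eq_connectedComponentSupp
    (c := G.connectedComponentMk v) rfl (Set.nonempty_of_ncard_ne_zero (by simp [hdeg]))
  have hmem : ∀ w, w ∈ p.support.tail := fun w => by
    have : w ∈ p.support := by
      rw [← Walk.mem_verts_toSubgraph, hverts, ConnectedComponent.mem_supp_iff]
      exact ConnectedComponent.sound (hG.preconnected w v)
    rw [← p.cons_tail_support, List.mem_cons] at this
    exact this.elim (fun h => h ▸ Walk.end_mem_tail_support hp.not_nil) id
  have hham : p.IsHamiltonianCycle :=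
    Walk.isHamiltonianCycle_iff_isCycle_and_support_count_tail_eq_one.mpr
      ⟨hp, fun w => List.count_eq_one_of_mem hp.support_nodup (hmem w)⟩
  have h3 := hp.three_le_length
  obtain ⟨f⟩ := (cycleGraph_isContained_iff h3).mpr ⟨v, p, hp, rfl⟩
  have hbij : Function.Bijective f :=
    (Fintype.bijective_iff_injective_and_card f).mpr ⟨f.injective, by simp [hham.length_eq]⟩
  refine ⟨p.length, h3, (nonempty_iso_of_bijective f.toHom hbij fun u => ?_).map RelIso.symm⟩
  rw [hdeg, ncard_neighborSet_cycleGraph h3]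

theorem eq_top_of_card_le_two [Finite α] (hG : G.Connected) (h : Nat.card α ≤ 2) : G = ⊤ := by
  ext a b
  refine ⟨G.ne_of_adj, fun hab => ?_⟩
  obtain ⟨a', ha', c, hc, hac⟩ :=
    exists_adj_mem_notMem hG.preconnected (Set.mem_singleton a) (Ne.symm hab)
  rw [Set.mem_singleton_iff] at ha' hc
  subst a'
  convert hac
  by_contra hbc
  have h3 : ({a, b, c} : Set α).ncard = 3 :=
    Set.ncard_eq_three.mpr ⟨a, b, c, hab, Ne.symm hc, hbc, rfl⟩
  have := Set.ncard_le_ncard (Set.subset_univ {a, b, c})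
  rw [Set.ncard_univ] at this
  omega

theorem exists_two_le_ncard_neighborSet [Finite α] (hG : G.Connected) (h : 2 < Nat.card α) :
    ∃ v, 2 ≤ (G.neighborSet v).ncard := by
  by_contra! hdeg
  have hunique : ∀ v, ∀ ⦃a b⦄, G.Adj v a → G.Adj v b → a = b := fun v _ _ ha hb =>
    (Set.ncard_le_one_iff (Set.toFinite _)).mp (Nat.le_of_lt_succ (hdeg v)) ha hb
  obtain ⟨v⟩ := hG.nonempty
  have : Nontrivial α := Finite.one_lt_card_iff_nontrivial.mp (by omega)
  obtain ⟨w, hwv⟩ := exists_ne v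
  obtain ⟨v', hv', w, hw, hvw⟩ := exists_adj_mem_notMem hG.preconnected (Set.mem_singleton v) hwv
  rw [Set.mem_singleton_iff] at hv' hw
  subst v'
  obtain ⟨u, hu⟩ : ({v, w} : Set α)ᶜ.Nonempty := by
    rw [Set.nonempty_compl]
    intro huniv
    have := Set.ncard_pair (Ne.symm hw)
    rw [huniv, Set.ncard_univ] at this
    omega
  obtain ⟨a, ha, b, hb, hab⟩ := exists_adj_mem_notMem hG.preconnected (Set.mem_insert v {w}) hu
  rcases ha with rfl | rfl
  · exact hb (Or.inr (hunique a hvw hab).symm)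
  · exact hb (Or.inl (hunique a hvw.symm hab).symm)

end SmallCases

/-- Every vertex-transitive finite connected graph is 3-connected,
a cycle, a `K₂`, or a `K₁`. -/
theorem stmt19 (G : SimpleGraph V) (hconn : G.Connected)
    (hvt : ∀ u v : V, ∃ φ : G ≃g G, φ u = v) :
    KConnected 3 G ∨ (∃ n : ℕ, 3 ≤ n ∧ Nonempty (G ≃g cycleGraph n)) ∨
      Nonempty (G ≃g completeGraph (Fin 2)) ∨
      Nonempty (G ≃g completeGraph (Fin 1)) := by
  rcases le_or_gt (Nat.card V) 2 with hle | hlt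
  · obtain rfl := eq_top_of_card_le_two hconn hle
    have := hconn.nonempty
    have : 0 < Nat.card V := Finite.card_pos
    obtain h | h : Nat.card V = 1 ∨ Nat.card V = 2 := by omega
    · exact Or.inr (Or.inr (Or.inr ⟨Iso.completeGraph ((Finite.equivFin V).trans (finCongr h))⟩))
    · exact Or.inr (Or.inr (Or.inl ⟨Iso.completeGraph ((Finite.equivFin V).trans (finCongr h))⟩))
  · have hreg : ∀ u v, (G.neighborSet u).ncard = (G.neighborSet v).ncard := fun u v => by
      obtain ⟨φ, rfl⟩ := hvt v u
      exact ncard_neighborSet_map φ v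
    obtain ⟨v, hv⟩ := exists_two_le_ncard_neighborSet hconn hlt
    rcases hv.eq_or_lt with h2 | h3
    · exact Or.inr (Or.inl (nonempty_iso_cycleGraph hconn fun u => (hreg u v).trans h2.symm))
    · exact Or.inl (kConnected_three hconn hvt fun u => hreg u v ▸ h3)

end Paper
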